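/- arXiv:1802.05246 — 3 statements merged into one kernel-verified Lean document; each statement's English description precedes it below -/
import Mathlib

section
/- For the discrete evolution p^{n+1/2} = I(S₊ p^n + S₋ p^n) - p^{n-1/2} with I an idempotent linear operator, the discrete conserved variables P_±^n = p^n - S_± p^{n-1/2} satisfy P_±^{n+1/2} = I S_∓ P_±^n + (I - 1) S_± P_∓^n, provided I p^n = p^n for all n. -/
theorem stmt_8 {V : Type*} [AddCommGroup V] [Module ℝ V]
    (I Sp Sm : V →ₗ[ℝ] V)
    (hinv₁ : ∀ v : V, Sp (Sm v) = v)
    (hinv₂ : ∀ v : V, Sm (Sp v) = v)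
    (p : ℕ → V)
    (hupd : ∀ k : ℕ, p (k + 2) = I (Sp (p (k + 1)) + Sm (p (k + 1))) - p k)
    (hfix : ∀ k : ℕ, I (p k) = p k)
    (Pp Pm : ℕ → V)
    (hPp : ∀ k : ℕ, Pp (k + 1) = p (k + 1) - Sp (p k))
    (hPm : ∀ k : ℕ, Pm (k + 1) = p (k + 1) - Sm (p k)) :
    ∀ k : ℕ,
      Pp (k + 2) = I (Sm (Pp (k + 1))) + (I (Sp (Pm (k + 1))) - Sp (Pm (k + 1))) ∧
      Pm (k + 2) = I (Sp (Pm (k + 1))) + (I (Sm (Pp (k + 1))) - Sm (Pp (k + 1))) := by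
  intro k
  have h1 := hPp (k+1)
  have h2 := hPm (k+1)
  constructor <;>
  simp only [show k+1+1 = k+2 from rfl] at h1 h2 <;>
  simp only [h1, h2, hPp, hPm, hupd, map_sub, map_add, hinv₁, hinv₂, hfix] <;>
  abel
end

section
/- Under the conservative Hermite evolution, assuming I is an orthogonal projection in the seminorm |·| and S_± preserve the seminorm, the discrete energy is exactly conserved: |P₊^{n+1/2}|² + |P₋^{n+1/2}|² = |P₊^n|² + |P₋^n|², where P_±^{n+1/2} = I S_∓ P_±^n + (I-1) S_± P_∓^n. -/
lemma pyth {V : Type*} [AddCommGroup V] [Module ℝ V]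
    (B : V →ₗ[ℝ] V →ₗ[ℝ] ℝ)
    (hsymm : ∀ u v : V, B u v = B v u)
    (I : V →ₗ[ℝ] V)
    (horth : ∀ u v : V, B (I u) (v - I v) = 0)
    (w : V) : B (I w) (I w) + B (w - I w) (w - I w) = B w w := by
  have h1 := horth w w
  have h2 : B (w - I w) (I w) = 0 := by rw [hsymm]; exact h1
  simp only [map_sub, LinearMap.sub_apply] at h1 h2 ⊢
  linarith

theorem stmt_9 {V : Type*} [AddCommGroup V] [Module ℝ V]
    (B : V →ₗ[ℝ] V →ₗ[ℝ] ℝ)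
    (hsymm : ∀ u v : V, B u v = B v u)
    (hpos : ∀ v : V, 0 ≤ B v v)
    (I Sp Sm : V →ₗ[ℝ] V)
    (hidem : ∀ v : V, I (I v) = I v)
    (horth : ∀ u v : V, B (I u) (v - I v) = 0)
    (hSp : ∀ v : V, B (Sp v) (Sp v) = B v v)
    (hSm : ∀ v : V, B (Sm v) (Sm v) = B v v)
    (Pp Pm : ℕ → V)
    (hrecp : ∀ n : ℕ, Pp (n + 1) = I (Sm (Pp n)) + (I (Sp (Pm n)) - Sp (Pm n)))
    (hrecm : ∀ n : ℕ, Pm (n + 1) = I (Sp (Pm n)) + (I (Sm (Pp n)) - Sm (Pp n))) :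
    ∀ n : ℕ,
      B (Pp (n + 1)) (Pp (n + 1)) + B (Pm (n + 1)) (Pm (n + 1))
        = B (Pp n) (Pp n) + B (Pm n) (Pm n) := by
  intro n
  set a := Sm (Pp n) with ha
  set b := Sp (Pm n) with hb
  have ca := horth a a
  have cb := horth b b
  have cab := horth a b
  have cba := horth b a
  have pa := pyth B hsymm I horth a
  have pb := pyth B hsymm I horth b
  have hPp : Pp (n + 1) = I a + (I b - b) := hrecp n
  have hPm : Pm (n + 1) = I b + (I a - a) := hrecm n
  have s1 := hsymm a (I a)
  have s2 := hsymm b (I b)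
  have s3 := hsymm a (I b)
  have s4 := hsymm b (I a)
  have s5 := hsymm (I a) (I b)
  have s6 := hsymm a b
  have hA : B a a = B (Pp n) (Pp n) := hSm (Pp n)
  have hB : B b b = B (Pm n) (Pm n) := hSp (Pm n)
  rw [hPp, hPm, ← hA, ← hB]
  simp only [map_add, map_sub, LinearMap.add_apply, LinearMap.sub_apply] at *
  linarith
end

section
/- For a polynomial p of degree at most 2m+1, the temporal Taylor recursion of the one-dimensional dissipative Hermite method truncates: if d_{l,s} is defined by d_{l,s} = c²(l+2)(l+1)/s · (Δt/h²) c_{l+2,s-1} with c_{l,s} = (Δt/s) d_{l,s-1}, and c_{l,0} = 0 for l > 2m+1, d_{l,0} = 0 for l > 2m-1, then c_{l,s} = 0 whenever s > 2m - 2⌊l/2⌋ + 1 and d_{l,s} = 0 whenever s > 2m - 1 - 2⌊l/2⌋. -/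
theorem stmt_16 (c0 Δt h : ℝ) (m : ℕ) (hm : 1 ≤ m)
    (hc : 0 < c0) (hΔt : 0 < Δt) (hh : 0 < h)
    (C D : ℕ → ℕ → ℝ)
    (hCrec : ∀ l s : ℕ, C l (s + 1) = (Δt / ((s : ℝ) + 1)) * D l s)
    (hDrec : ∀ l s : ℕ,
      D l (s + 1)
        = c0 ^ 2 * (((l : ℝ) + 2) * ((l : ℝ) + 1) / ((s : ℝ) + 1)) * (Δt / h ^ 2)
            * C (l + 2) s)
    (hC0 : ∀ l : ℕ, 2 * m + 1 < l → C l 0 = 0)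
    (hD0 : ∀ l : ℕ, 2 * m - 1 < l → D l 0 = 0) :
    (∀ l s : ℕ, (2 * (m : ℤ) - 2 * ((l / 2 : ℕ) : ℤ) + 1 < (s : ℤ)) → C l s = 0) ∧
    (∀ l s : ℕ, (2 * (m : ℤ) - 1 - 2 * ((l / 2 : ℕ) : ℤ) < (s : ℤ)) → D l s = 0) := by
  have key : ∀ s : ℕ,
      (∀ l, 2 * m + 2 ≤ l + s + s % 2 → C l s = 0) ∧
      (∀ l, 2 * m + 1 ≤ l + s + (s + 1) % 2 → D l s = 0) := by
    intro s
    induction s with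
    | zero =>
      exact ⟨fun l hl => hC0 l (by omega), fun l hl => hD0 l (by omega)⟩
    | succ s ih =>
      constructor
      · intro l hl
        rw [hCrec, ih.2 l (by omega)]
        ring
      · intro l hl
        rw [hDrec, ih.1 (l + 2) (by omega)]
        ring
  constructor
  · intro l s hl
    exact (key s).1 l (by omega)
  · intro l s hl
    exact (key s).2 l (by omega)
end
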